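/- arXiv:1206.4898 — 2 statements merged into one kernel-verified Lean document; each statement's English description precedes it below -/
import Mathlib

section
/- Let (X, d) be a finite metric space and suppose X admits a stochastic D-embedding into a family 𝒴 of metric spaces, i.e., a random space (Y, d') ∈ 𝒴 and random non-contracting map f : X → Y with E[d'(f(x), f(y))] ≤ D·d(x,y) for all x, y. Let Π be a linear minimization problem with feasible set ℐ ⊆ ℝ≥0^{X×X} and cost vector c ∈ ℝ≥0^{X×X}. If s* is an optimal solution for (X, d) and ŝ ∈ ℐ is an α-approximate solution on the (random) space (Y, d') restricted to f(X), then E[ Σ_{u,v} c_{u,v} ŝ_{u,v} d(u,v) ] ≤ α·D · Σ_{u,v} c_{u,v} s*_{u,v} d(u,v). In particular, the stochastic embedding yields an (α·D)-approximation in expectation. -/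
/-- a stochastic `D`-embedding (a random non-contracting map
`f ω : X → Y ω` with expected expansion at most `D`) turns an `α`-approximate
solution of a linear minimization problem `(I, c)` on the random target space
into an `(α·D)`-approximation in expectation on `(X, d)`. -/
theorem stochastic_embedding_approximation
    {X : Type*} [MetricSpace X] [Fintype X]
    {m : ℕ} (p : Fin m → ℝ) (Y : Fin m → Type*) [∀ ω, MetricSpace (Y ω)]
    (f : ∀ ω, X → Y ω) (D α : ℝ) (hα : 0 ≤ α)
    (hp0 : ∀ ω, 0 ≤ p ω) (hp1 : ∑ ω, p ω = 1)
    (hnc : ∀ ω (x y : X), dist x y ≤ dist (f ω x) (f ω y))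
    (hD : ∀ x y : X, ∑ ω, p ω * dist (f ω x) (f ω y) ≤ D * dist x y)
    (I : Set (X × X → ℝ)) (c : X × X → ℝ)
    (hc : ∀ q, 0 ≤ c q) (hI : ∀ s ∈ I, ∀ q, 0 ≤ s q)
    (sstar : X × X → ℝ) (hsstar : sstar ∈ I)
    (hopt : ∀ s ∈ I,
      ∑ q : X × X, c q * sstar q * dist q.1 q.2 ≤
        ∑ q : X × X, c q * s q * dist q.1 q.2)
    (shat : Fin m → X × X → ℝ) (hshat : ∀ ω, shat ω ∈ I)
    (happrox : ∀ ω, ∀ s ∈ I,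
      ∑ q : X × X, c q * shat ω q * dist (f ω q.1) (f ω q.2) ≤
        α * ∑ q : X × X, c q * s q * dist (f ω q.1) (f ω q.2)) :
    ∑ ω, p ω * ∑ q : X × X, c q * shat ω q * dist q.1 q.2 ≤
      α * D * ∑ q : X × X, c q * sstar q * dist q.1 q.2 := by
  have step1 : ∑ ω, p ω * ∑ q : X × X, c q * shat ω q * dist q.1 q.2 ≤
      ∑ ω, p ω * (α * ∑ q : X × X, c q * sstar q * dist (f ω q.1) (f ω q.2)) := by
    apply Finset.sum_le_sum
    intro ω _
    apply mul_le_mul_of_nonneg_left _ (hp0 ω)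
    calc ∑ q : X × X, c q * shat ω q * dist q.1 q.2
        ≤ ∑ q : X × X, c q * shat ω q * dist (f ω q.1) (f ω q.2) := by
          apply Finset.sum_le_sum
          intro q _
          exact mul_le_mul_of_nonneg_left (hnc ω q.1 q.2)
            (mul_nonneg (hc q) (hI _ (hshat ω) q))
      _ ≤ α * ∑ q : X × X, c q * sstar q * dist (f ω q.1) (f ω q.2) :=
          happrox ω sstar hsstar
  refine step1.trans ?_
  have swap : ∑ ω, p ω * (α * ∑ q : X × X, c q * sstar q * dist (f ω q.1) (f ω q.2)) =
      α * ∑ q : X × X, c q * sstar q * ∑ ω, p ω * dist (f ω q.1) (f ω q.2) := by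
    simp only [Finset.mul_sum]
    rw [Finset.sum_comm]
    exact Finset.sum_congr rfl fun q _ => Finset.sum_congr rfl fun ω _ => by ring
  rw [swap, mul_assoc]
  apply mul_le_mul_of_nonneg_left _ hα
  rw [Finset.mul_sum]
  apply Finset.sum_le_sum
  intro q _
  calc c q * sstar q * ∑ ω, p ω * dist (f ω q.1) (f ω q.2)
      ≤ c q * sstar q * (D * dist q.1 q.2) :=
        mul_le_mul_of_nonneg_left (hD q.1 q.2) (mul_nonneg (hc q) (hI _ hsstar q))
    _ = D * (c q * sstar q * dist q.1 q.2) := by ring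
end

section
/- Let G be a graph with weight function w, H a connected subgraph of G, G' the graph obtained by contracting H to a single vertex r', and w' the weight on G' that is 0 on r' and equals w elsewhere. If S' ⊆ V(G') is a balanced vertex separator of (G', w'), then (S' \ {r'}) ∪ V(H) ⊆ V(G) is a balanced vertex separator of (G, w). -/
open Classical in
/-- Total weight of a set of vertices. -/
noncomputable def setWeight {V : Type*} [Fintype V] (w : V → ℝ) (S : Set V) : ℝ :=
  ∑ v : V, if v ∈ S then w v else 0

/-- The graph `G` with the vertex set `X` deleted (edges touching `X` removed). -/
def SimpleGraph.avoid {V : Type*} (G : SimpleGraph V) (X : Set V) : SimpleGraph V where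
  Adj u v := G.Adj u v ∧ u ∉ X ∧ v ∉ X
  symm := by
    constructor
    intro u v h
    exact ⟨h.1.symm, h.2.2, h.2.1⟩
  loopless := by
    constructor
    intro u h
    exact G.irrefl h.1

/-- The connected component of `v` in `G \ X`. -/
def component {V : Type*} (G : SimpleGraph V) (X : Set V) (v : V) : Set V :=
  {u | (G.avoid X).Reachable v u}

/-- The set of connected components of `G \ X` (as vertex sets),
one for each vertex outside of `X`. -/
def comps {V : Type*} (G : SimpleGraph V) (X : Set V) : Set (Set V) :=
  {C | ∃ v, v ∉ X ∧ C = component G X v}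

/-- `X` is an `α`-balanced vertex separator for `(G, w)`: every connected
component of `G \ X` has weight at most `α · w(V(G))`. -/
def IsBalancedSep {V : Type*} [Fintype V] (G : SimpleGraph V) (w : V → ℝ)
    (α : ℝ) (X : Set V) : Prop :=
  ∀ v, v ∉ X → setWeight w (component G X v) ≤ α * setWeight w Set.univ

/-- `S` induces a connected (nonempty) subgraph of `G`. -/
def ConnectedIn {V : Type*} (G : SimpleGraph V) (S : Set V) : Prop :=
  S.Nonempty ∧ ∀ u ∈ S, ∀ v ∈ S, (G.avoid Sᶜ).Reachable u v

/-- contraction lemma: let `G'` be obtained from `G` by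
contracting a connected subgraph with vertex set `Hset` to a single vertex
`r'` (described by the quotient map `q : V → W`), and let `w'` be the weight
that is `0` on `r'` and agrees with `w` elsewhere. If `S'` is a balanced
vertex separator of `(G', w')`, then `q⁻¹(S' \ {r'}) ∪ Hset` is a balanced
vertex separator of `(G, w)`. -/
theorem contraction_separator
    {V W : Type*} [Fintype V] [Fintype W]
    (G : SimpleGraph V) (w : V → ℝ) (hw : ∀ v, 0 ≤ w v)
    (Hset : Set V) (hH : ConnectedIn G Hset)
    (G' : SimpleGraph W) (q : V → W) (r' : W)
    (hq : Function.Surjective q)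
    (hqr : ∀ v, v ∈ Hset ↔ q v = r')
    (hinj : Set.InjOn q Hsetᶜ)
    (hadj : ∀ a b : W, G'.Adj a b ↔ a ≠ b ∧ ∃ u v, q u = a ∧ q v = b ∧ G.Adj u v)
    (w' : W → ℝ) (hw'r : w' r' = 0)
    (hw' : ∀ v, v ∉ Hset → w' (q v) = w v)
    (S' : Set W) (hsep : IsBalancedSep G' w' (1 / 2) S') :
    IsBalancedSep G w (1 / 2) ({v | q v ∈ S' ∧ q v ≠ r'} ∪ Hset) := by
  classical
  intro v hv
  set X : Set V := {v | q v ∈ S' ∧ q v ≠ r'} ∪ Hset with hXdef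
  have hXiff : ∀ u : V, u ∉ X ↔ (u ∉ Hset ∧ q u ∉ S') := by
    intro u
    constructor
    · intro h
      have h2 : u ∉ Hset := fun hc => h (Or.inr hc)
      exact ⟨h2, fun hs => h (Or.inl ⟨hs, fun hr => h2 ((hqr u).mpr hr)⟩)⟩
    · rintro ⟨h2, hs⟩ (h | h)
      · exact hs h.1
      · exact h2 h
  have hv' := (hXiff v).mp hv
  -- walks in `G.avoid X` stay out of `X`
  have notX : ∀ {a b : V}, (G.avoid X).Walk a b → a ∉ X → b ∉ X := by
    intro a b p
    induction p with
    | nil => exact id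
    | cons h _ ih => intro _; exact ih h.2.2
  -- walks in `G.avoid X` map to reachability in `G'.avoid S'`
  have reach : ∀ {a b : V}, (G.avoid X).Walk a b →
      (G'.avoid S').Reachable (q a) (q b) := by
    intro a b p
    induction p with
    | nil => exact SimpleGraph.Reachable.refl _
    | @cons a c d h _ ih =>
      have ha := (hXiff a).mp h.2.1
      have hc := (hXiff c).mp h.2.2
      by_cases he : q a = q c
      · rw [he]; exact ih
      · exact ((show (G'.avoid S').Adj (q a) (q c) from
          ⟨(hadj _ _).mpr ⟨he, a, c, rfl, rfl, h.1⟩, ha.2, hc.2⟩).reachable).trans ih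
  have hsub : ∀ u, u ∈ component G X v →
      u ∉ Hset ∧ q u ∈ component G' S' (q v) := by
    intro u hu
    obtain ⟨p⟩ := hu
    exact ⟨((hXiff u).mp (notX p hv)).1, reach p⟩
  -- sum transfer lemma
  have sumeq : ∀ P : W → Prop,
      (∑ u : V, if u ∉ Hset ∧ P (q u) then w u else 0)
        = ∑ a : W, if a ≠ r' ∧ P a then w' a else 0 := by
    intro P
    rw [← Finset.sum_filter, ← Finset.sum_filter]
    refine Finset.sum_bij (fun u _ => q u) ?_ ?_ ?_ ?_
    · intro u hu
      simp only [Finset.mem_filter, Finset.mem_univ, true_and] at hu ⊢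
      exact ⟨fun hr => hu.1 ((hqr u).mpr hr), hu.2⟩
    · intro u₁ hu₁ u₂ hu₂ he
      simp only [Finset.mem_filter, Finset.mem_univ, true_and] at hu₁ hu₂
      exact hinj hu₁.1 hu₂.1 he
    · intro a ha
      simp only [Finset.mem_filter, Finset.mem_univ, true_and] at ha
      obtain ⟨u, rfl⟩ := hq a
      have hu : u ∉ Hset := fun hc => ha.1 ((hqr u).mp hc)
      exact ⟨u, by simp [hu, ha.2], rfl⟩
    · intro u hu
      simp only [Finset.mem_filter, Finset.mem_univ, true_and] at hu
      exact (hw' u hu.1).symm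
  -- total weights compare
  have htot : setWeight w' Set.univ ≤ setWeight w Set.univ := by
    have h1' := sumeq fun _ => True
    simp only [and_true] at h1'
    have h1 : setWeight w' Set.univ
        = ∑ a : W, if a ≠ r' then w' a else 0 := by
      unfold setWeight
      refine Finset.sum_congr rfl fun a _ => ?_
      by_cases ha : a = r'
      · subst ha; simp [hw'r]
      · simp [ha]
    rw [h1, ← h1']
    unfold setWeight
    refine Finset.sum_le_sum fun u _ => ?_
    by_cases hu : u ∈ Hset
    · simp [hu, hw u]
    · simp [hu]
  -- component weights compare
  have hcomp : setWeight w (component G X v)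
      ≤ setWeight w' (component G' S' (q v)) := by
    have h2' := sumeq fun a => a ∈ component G' S' (q v)
    have h2 : setWeight w' (component G' S' (q v))
        = ∑ a : W, if a ≠ r' ∧ a ∈ component G' S' (q v) then w' a else 0 := by
      unfold setWeight
      refine Finset.sum_congr rfl fun a _ => ?_
      by_cases ha : a = r'
      · subst ha; simp [hw'r]
      · simp [ha]
    rw [h2, ← h2']
    unfold setWeight
    refine Finset.sum_le_sum fun u _ => ?_
    by_cases hu : u ∈ component G X v
    · simp [hu, hsub u hu]
    · simp only [hu, if_false]
      by_cases h' : u ∉ Hset ∧ q u ∈ component G' S' (q v)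
      · simp [h', hw u]
      · simp [h']
  have hbal := hsep (q v) hv'.2
  calc setWeight w (component G X v)
      ≤ setWeight w' (component G' S' (q v)) := hcomp
    _ ≤ 1 / 2 * setWeight w' Set.univ := hbal
    _ ≤ 1 / 2 * setWeight w Set.univ := by linarith
end
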